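/- Let T be a Cartesian tree on m nodes whose root is the node at in-order position k. Then the number of distinct Cartesian trees obtainable by a swap at position k-1 equals LMP(right(T)) + 1, and the number obtainable by a swap at position k equals RMP(left(T)) + 1, where LMP and RMP denote the lengths of the leftmost and rightmost paths. -/

import Mathlib

/-- Binary tree shapes (Cartesian trees are determined by their shape). -/
inductive BTree : Type
  | nil : BTree
  | node : BTree → BTree → BTree
deriving DecidableEq

namespace BTree

/-- Number of nodes. -/
def size : BTree → ℕ
  | nil => 0
  | node l r => size l + size r + 1

/-- Length of the leftmost path. -/
def LMP : BTree → ℕ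
  | nil => 0
  | node l _ => LMP l + 1

/-- Length of the rightmost path. -/
def RMP : BTree → ℕ
  | nil => 0
  | node _ r => RMP r + 1

end BTree

/-- Minimum value of a list (0 for the empty list). -/
def listMin : List ℤ → ℤ
  | [] => 0
  | a :: t => t.foldl min a

/-- Index (0-based) of the minimum of a list. -/
def minIdx (l : List ℤ) : ℕ := l.idxOf (listMin l)

/-- Cartesian tree of a list, with fuel for termination. -/
def ctreeAux : ℕ → List ℤ → BTree
  | 0, _ => .nil
  | _ + 1, [] => .nil
  | n + 1, a :: t =>
      let g := minIdx (a :: t)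
      .node (ctreeAux n ((a :: t).take g)) (ctreeAux n ((a :: t).drop (g + 1)))

/-- Cartesian tree of a list: the root is the position of the minimum,
its subtrees are the Cartesian trees of the prefix and suffix around it. -/
def ctreeL (l : List ℤ) : BTree := ctreeAux l.length l

/-- The factor x[a..b] (1-based positions) of a sequence, as a list. -/
def seqList (x : ℕ → ℤ) (a b : ℕ) : List ℤ :=
  (List.range (b + 1 - a)).map (fun k => x (a + k))

/-- Cartesian tree of the sequence x[1..m]. -/
def ctreeOf (m : ℕ) (x : ℕ → ℤ) : BTree := ctreeL (seqList x 1 m)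

/-- Positions j < h (1-based) with x[j] < x[h]. -/
def PDset (x : ℕ → ℤ) (h : ℕ) : Finset ℕ :=
  (Finset.Ico 1 h).filter (fun j => x j < x h)

/-- Parent-distance table: PD_x[h] = h - max{j < h : x[j] < x[h]}, 0 if no such j. -/
def PD (x : ℕ → ℤ) (h : ℕ) : ℕ :=
  if hs : (PDset x h).Nonempty then h - (PDset x h).max' hs else 0

/-- Positions h < j ≤ m with x[j] < x[h]. -/
def RPDset (m : ℕ) (x : ℕ → ℤ) (h : ℕ) : Finset ℕ :=
  (Finset.Ioc h m).filter (fun j => x j < x h)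

/-- Reverse parent-distance table: RPD_x[h] = min{j > h : x[j] < x[h]} - h, 0 if no such j. -/
def RPD (m : ℕ) (x : ℕ → ℤ) (h : ℕ) : ℕ :=
  if hs : (RPDset m x h).Nonempty then (RPDset m x h).min' hs - h else 0

/-- Referent of h: the smallest position j > h with x[j] < x[h], or -1 if none. -/
def refD (m : ℕ) (x : ℕ → ℤ) (h : ℕ) : ℤ :=
  if hs : (RPDset m x h).Nonempty then ((RPDset m x h).min' hs : ℤ) else -1

/-- Skipped-number table: SN_x[h] is the number of nodes on the rightmost path of the
left subtree of node h in C(x), i.e. the number of positions whose referent is h. -/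
def SN (m : ℕ) (x : ℕ → ℤ) (h : ℕ) : ℕ :=
  ((Finset.Ico 1 h).filter (fun j => refD m x j = (h : ℤ))).card

/-- The swap τ(x,i): exchange the entries at positions i and i+1. -/
def swapAt (x : ℕ → ℤ) (i : ℕ) : ℕ → ℤ :=
  fun j => if j = i then x (i + 1) else if j = i + 1 then x i else x j

/-- ng(T,i): the Cartesian trees obtained from a sequence realizing T by one swap
at position i (valid positions are 1 ≤ i ≤ m-1). -/
def ngi (m : ℕ) (T : BTree) (i : ℕ) : Set BTree :=
  { S | 1 ≤ i ∧ i + 1 ≤ m ∧ ∃ x : ℕ → ℤ, Set.InjOn x (Set.Icc 1 m) ∧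
        ctreeOf m x = T ∧ S = ctreeOf m (swapAt x i) }

/-- ng(T): the swap neighbourhood of T. -/
def ng (m : ℕ) (T : BTree) : Set BTree := ⋃ i, ngi m T i

/-- Number of permutations of {1,...,n} whose Cartesian tree is A. -/
noncomputable def permCount (n : ℕ) (A : BTree) : ℕ :=
  Set.ncard { σ : Equiv.Perm (Fin n) |
    ctreeL (List.ofFn (fun k : Fin n => ((σ k : ℕ) : ℤ) + 1)) = A }

/-- Product over all nodes t of A of the size of the subtree rooted at t. -/
def hookProd : BTree → ℕ
  | .nil => 1
  | .node l r => (BTree.node l r).size * hookProd l * hookProd r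


/-!
Swapping the root `q` of `C(x)` with its in-order predecessor `p` makes `q` the root of the new
tree. Its left subtree is that of `x[1..k-2]`, i.e. `L` without its last node, and its right
subtree is the tree of `p` followed by `x[k+1..m]`: prepending `p` to a sequence inserts a node
into the leftmost path of its tree `R` at some depth `j ≤ LMP R` (`cutL j R`). Every depth occurs
for a suitable choice of values, and distinct depths give distinct trees, whence `LMP R + 1`
neighbours. Reversing the sequence mirrors all trees and turns the swap at `k` into a swap at the
predecessor of the root of the mirror image, which gives `RMP L + 1`.
-/

namespace BTree

def mirror : BTree → BTree
  | nil => nil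
  | node a b => node b.mirror a.mirror

def delLast : BTree → BTree
  | nil => nil
  | node l nil => l
  | node l (node r₁ r₂) => node l (node r₁ r₂).delLast

/-- The tree of `v :: l` when `v` lands at depth `j` of the leftmost path of the tree of `l`:
the new node takes over the part of the leftmost path below it as its right subtree. -/
def cutL : ℕ → BTree → BTree
  | 0, R => node nil R
  | _ + 1, nil => node nil nil
  | j + 1, node A B => node (cutL j A) B

@[simp] lemma mirror_mirror (T : BTree) : T.mirror.mirror = T := by
  induction T with
  | nil => rfl
  | node a b iha ihb => rw [mirror, mirror, iha, ihb]

lemma mirror_injective : Function.Injective mirror :=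
  Function.LeftInverse.injective mirror_mirror

@[simp] lemma size_mirror (T : BTree) : T.mirror.size = T.size := by
  induction T with
  | nil => rfl
  | node a b iha ihb => rw [mirror, size, size, iha, ihb, Nat.add_comm a.size]

@[simp] lemma LMP_mirror (T : BTree) : T.mirror.LMP = T.RMP := by
  induction T with
  | nil => rfl
  | node a b _ ihb => rw [mirror, LMP, RMP, ihb]

lemma delLast_node {X Y : BTree} (h : Y ≠ nil) : (node X Y).delLast = node X Y.delLast := by
  cases Y with
  | nil => exact absurd rfl h
  | node => rfl

lemma cutL_ne_nil (j : ℕ) (R : BTree) : cutL j R ≠ nil := by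
  cases j <;> cases R <;> simp [cutL]

lemma eq_of_cutL_eq {j j' : ℕ} {R R' : BTree} (hj : j ≤ R.LMP) (hj' : j' ≤ R'.LMP)
    (h : cutL j R = cutL j' R') : j = j' ∧ R = R' := by
  induction j generalizing j' R R' with
  | zero =>
    cases j' with
    | zero => exact ⟨rfl, (node.inj h).2⟩
    | succ j' =>
      cases R' with
      | nil => simp [LMP] at hj'
      | node A' B' => exact absurd (node.inj h).1.symm (cutL_ne_nil j' A')
  | succ j ih =>
    cases R with
    | nil => simp [LMP] at hj
    | node A B =>
      cases j' with
      | zero => exact absurd (node.inj h).1 (cutL_ne_nil j A)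
      | succ j' =>
        cases R' with
        | nil => simp [LMP] at hj'
        | node A' B' =>
          simp only [LMP, cutL, node.injEq] at hj hj' h
          obtain ⟨rfl, rfl⟩ := ih (by omega) (by omega) h.1
          exact ⟨rfl, by rw [h.2]⟩

end BTree

section CartesianTree

open BTree

variable {l l₁ l₂ : List ℤ} {a v : ℤ}

lemma min?_eq_some_listMin (h : l ≠ []) : l.min? = some (listMin l) := by
  cases l with
  | nil => exact absurd rfl h
  | cons a t => exact List.min?_cons'

lemma listMin_mem (h : l ≠ []) : listMin l ∈ l :=
  List.min?_mem (min?_eq_some_listMin h)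

lemma listMin_le (h : l ≠ []) {b : ℤ} (hb : b ∈ l) : listMin l ≤ b :=
  (List.le_min?_iff (min?_eq_some_listMin h)).1 le_rfl b hb

lemma minIdx_append (h₁ : ∀ b ∈ l₁, a < b) (h₂ : ∀ b ∈ l₂, a < b) :
    minIdx (l₁ ++ a :: l₂) = l₁.length := by
  have hne : l₁ ++ a :: l₂ ≠ [] := by simp
  have hmin : listMin (l₁ ++ a :: l₂) = a := by
    refine le_antisymm (listMin_le hne (by simp)) (not_lt.1 fun hlt => ?_)
    rcases List.mem_append.1 (listMin_mem hne) with h | h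
    · exact (h₁ _ h).not_ge hlt.le
    · rcases List.mem_cons.1 h with h | h
      · exact hlt.ne h
      · exact (h₂ _ h).not_ge hlt.le
  have ha : a ∉ l₁ := fun h => lt_irrefl a (h₁ a h)
  simp [minIdx, hmin, List.idxOf_append, ha]

lemma minIdx_lt_length (h : l ≠ []) : minIdx l < l.length :=
  List.idxOf_lt_length_iff.2 (listMin_mem h)

lemma ctreeAux_nil : ∀ n, ctreeAux n [] = .nil
  | 0 | _ + 1 => rfl

lemma ctreeAux_congr_fuel {n n' : ℕ} (h : l.length ≤ n) (h' : l.length ≤ n') :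
    ctreeAux n l = ctreeAux n' l := by
  induction n generalizing n' l with
  | zero => rw [List.length_eq_zero_iff.1 (by omega : l.length = 0), ctreeAux_nil, ctreeAux_nil]
  | succ n ih =>
    rcases eq_or_ne l [] with rfl | hne
    · rw [ctreeAux_nil, ctreeAux_nil]
    obtain ⟨a, t, rfl⟩ := List.exists_cons_of_ne_nil hne
    obtain ⟨n', rfl⟩ : ∃ n'', n' = n'' + 1 := Nat.exists_eq_succ_of_ne_zero (by simp at h'; omega)
    have hg := minIdx_lt_length hne
    simp only [List.length_cons] at h h' hg
    simp only [ctreeAux]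
    rw [ih (n' := n'), ih (n' := n')] <;>
      simp only [List.length_take, List.length_drop, List.length_cons, minIdx] at hg ⊢ <;> omega

lemma ctreeAux_eq_ctreeL {n : ℕ} (h : l.length ≤ n) : ctreeAux n l = ctreeL l :=
  ctreeAux_congr_fuel h le_rfl

@[simp] lemma ctreeL_nil : ctreeL [] = .nil := rfl

lemma ctreeL_eq_node (h : l ≠ []) :
    ctreeL l = .node (ctreeL (l.take (minIdx l))) (ctreeL (l.drop (minIdx l + 1))) := by
  obtain ⟨a, t, rfl⟩ := List.exists_cons_of_ne_nil h
  have hg := minIdx_lt_length h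
  simp only [List.length_cons] at hg
  rw [ctreeL, List.length_cons, ctreeAux, ctreeAux_eq_ctreeL, ctreeAux_eq_ctreeL] <;>
    simp only [List.length_take, List.length_drop, List.length_cons] <;> omega

lemma ctreeL_ne_nil (h : l ≠ []) : ctreeL l ≠ .nil := by
  rw [ctreeL_eq_node h]; exact BTree.noConfusion

lemma ctreeL_split (h₁ : ∀ b ∈ l₁, a < b) (h₂ : ∀ b ∈ l₂, a < b) :
    ctreeL (l₁ ++ a :: l₂) = .node (ctreeL l₁) (ctreeL l₂) := by
  rw [ctreeL_eq_node (by simp), minIdx_append h₁ h₂, List.take_left' rfl,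
    show l₁ ++ a :: l₂ = (l₁ ++ [a]) ++ l₂ by simp, List.drop_left' (by simp)]

lemma exists_split_at_min (hl : l.Nodup) (hne : l ≠ []) :
    ∃ l₁ a l₂, l = l₁ ++ a :: l₂ ∧ (∀ b ∈ l₁, a < b) ∧ (∀ b ∈ l₂, a < b) := by
  have hle : ∀ b ∈ l, listMin l ≤ b := fun b => listMin_le hne
  obtain ⟨l₁, l₂, hl₁₂⟩ := List.append_of_mem (listMin_mem hne)
  generalize listMin l = a at hle hl₁₂
  subst hl₁₂
  have hnd := List.nodup_append.1 hl
  refine ⟨l₁, a, l₂, rfl, fun b hb => ?_, fun b hb => ?_⟩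
  · exact lt_of_le_of_ne (hle b (by simp [hb])) fun h => hnd.2.2 b hb a (by simp) h.symm
  · exact lt_of_le_of_ne (hle b (by simp [hb])) fun h => (List.nodup_cons.1 hnd.2.1).1 (h ▸ hb)

@[elab_as_elim]
theorem List.Nodup.induction_on_min {P : List ℤ → Prop} (hl : l.Nodup) (nil : P [])
    (split : ∀ l₁ a l₂, (∀ b ∈ l₁, a < b) → (∀ b ∈ l₂, a < b) → P l₁ → P l₂ →
      P (l₁ ++ a :: l₂)) : P l := by
  induction h : l.length using Nat.strong_induction_on generalizing l with
  | _ n ih =>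
    rcases eq_or_ne l [] with rfl | hne
    · exact nil
    obtain ⟨l₁, a, l₂, rfl, h₁, h₂⟩ := exists_split_at_min hl hne
    have hnd := List.nodup_append.1 hl
    simp only [List.length_append, List.length_cons] at h
    exact split l₁ a l₂ h₁ h₂ (ih _ (by omega) hnd.1 rfl) (ih _ (by omega) hnd.2.1.of_cons rfl)

lemma size_ctreeL (hl : l.Nodup) : (ctreeL l).size = l.length := by
  refine hl.induction_on_min rfl fun l₁ a l₂ h₁ h₂ ih₁ ih₂ => ?_
  simp [ctreeL_split h₁ h₂, size, ih₁, ih₂]; omega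

lemma ctreeL_map {f : ℤ → ℤ} (hf : StrictMono f) (hl : l.Nodup) :
    ctreeL (l.map f) = ctreeL l := by
  refine hl.induction_on_min rfl fun l₁ a l₂ h₁ h₂ ih₁ ih₂ => ?_
  rw [ctreeL_split h₁ h₂, List.map_append, List.map_cons,
    ctreeL_split (by simpa using fun b hb => hf (h₁ b hb))
      (by simpa using fun b hb => hf (h₂ b hb)), ih₁, ih₂]

lemma ctreeL_reverse (hl : l.Nodup) : ctreeL l.reverse = (ctreeL l).mirror := by
  refine hl.induction_on_min rfl fun l₁ a l₂ h₁ h₂ ih₁ ih₂ => ?_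
  rw [List.reverse_append, List.reverse_cons, List.append_assoc, List.singleton_append,
    ctreeL_split (by simpa using h₂) (by simpa using h₁), ctreeL_split h₁ h₂, ih₁, ih₂, mirror]

lemma ctreeL_dropLast (hl : l.Nodup) : ctreeL l.dropLast = (ctreeL l).delLast := by
  refine hl.induction_on_min rfl fun l₁ a l₂ h₁ h₂ _ ih₂ => ?_
  rcases eq_or_ne l₂ [] with rfl | hne
  · simp [ctreeL_split h₁ h₂, delLast]
  · rw [List.dropLast_append_of_ne_nil (by simp), List.dropLast_cons_of_ne_nil hne,
      ctreeL_split h₁ fun b hb => h₂ b (List.dropLast_subset _ hb), ih₂,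
      ctreeL_split h₁ h₂, delLast_node (ctreeL_ne_nil hne)]

lemma ctreeL_cons (hl : l.Nodup) (hv : v ∉ l) :
    ∃ j ≤ (ctreeL l).LMP, ctreeL (v :: l) = cutL j (ctreeL l) := by
  refine hl.induction_on_min (P := fun l => v ∉ l → ∃ j ≤ (ctreeL l).LMP,
      ctreeL (v :: l) = cutL j (ctreeL l))
    (fun _ => ⟨0, le_rfl, ctreeL_split (l₁ := []) (by simp) (by simp)⟩)
    (fun l₁ a l₂ h₁ h₂ ih₁ _ hv => ?_) hv
  rcases lt_or_gt_of_ne (show v ≠ a by rintro rfl; simp at hv) with hva | hav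
  · refine ⟨0, Nat.zero_le _, ctreeL_split (l₁ := []) (by simp) fun b hb => ?_⟩
    simp only [List.mem_append, List.mem_cons] at hb
    rcases hb with hb | rfl | hb
    exacts [hva.trans (h₁ b hb), hva, hva.trans (h₂ b hb)]
  · obtain ⟨j, hj, hcut⟩ := ih₁ fun h => hv (by simp [h])
    refine ⟨j + 1, by simp [ctreeL_split h₁ h₂, LMP, hj], ?_⟩
    rw [← List.cons_append, ctreeL_split ?_ h₂, hcut, ctreeL_split h₁ h₂, cutL]
    simpa [hav] using h₁

end CartesianTree

section RootSwap

open BTree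

variable {l a b : List ℤ} {p q : ℤ} {L R : BTree}

lemma exists_nodup_ctreeL_eq (T : BTree) (lo : ℤ) :
    ∃ l : List ℤ, l.Nodup ∧ ctreeL l = T ∧ ∀ x ∈ l, lo < x ∧ x ≤ lo + T.size := by
  induction T generalizing lo with
  | nil => exact ⟨[], List.nodup_nil, rfl, by simp⟩
  | node A B ihA ihB =>
    obtain ⟨lA, hAnd, hAct, hAbd⟩ := ihA (lo + 1)
    obtain ⟨lB, hBnd, hBct, hBbd⟩ := ihB (lo + 1 + A.size)
    refine ⟨lA ++ (lo + 1) :: lB, ?_, ?_, ?_⟩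
    · refine List.nodup_append.2 ⟨hAnd, List.nodup_cons.2 ⟨fun h => ?_, hBnd⟩, ?_⟩
      · have := hBbd _ h; omega
      · rintro x hx y hy rfl
        have := hAbd x hx
        rcases List.mem_cons.1 hy with rfl | hy
        · omega
        · have := hBbd x hy; omega
    · rw [ctreeL_split (fun x hx => (hAbd x hx).1) fun x hx => by have := hBbd x hx; omega,
        hAct, hBct]
    · intro x hx
      simp only [List.mem_append, List.mem_cons] at hx
      simp only [size, Nat.cast_add, Nat.cast_one]
      rcases hx with hx | rfl | hx
      · have := hAbd x hx; omega
      · omega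
      · have := hBbd x hx; omega

lemma exists_split_of_ctreeL_eq_node (hl : l.Nodup) (h : ctreeL l = .node L R) :
    ∃ l₁ r l₂, l = l₁ ++ r :: l₂ ∧ (∀ x ∈ l₁, r < x) ∧ (∀ x ∈ l₂, r < x) ∧
      ctreeL l₁ = L ∧ ctreeL l₂ = R := by
  have hne : l ≠ [] := by rintro rfl; simp at h
  obtain ⟨l₁, r, l₂, rfl, h₁, h₂⟩ := exists_split_at_min hl hne
  rw [ctreeL_split h₁ h₂, node.injEq] at h
  exact ⟨l₁, r, l₂, rfl, h₁, h₂, h⟩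

lemma exists_cutL_of_swap_root_pred (hl : (a ++ p :: q :: b).Nodup)
    (ha : a.length + 1 = L.size) (h : ctreeL (a ++ p :: q :: b) = .node L R) :
    ∃ j ≤ R.LMP, ctreeL (a ++ q :: p :: b) = .node L.delLast (cutL j R) := by
  have hpqb := hl.of_append_right
  have hpb : p ∉ b := fun h => (List.nodup_cons.1 hpqb).1 (List.mem_cons_of_mem q h)
  obtain ⟨j, hj, hcut⟩ := ctreeL_cons hpqb.of_cons.of_cons hpb
  obtain ⟨l₁, r, l₂, heq, h₁, h₂, rfl, rfl⟩ := exists_split_of_ctreeL_eq_node hl h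
  have hlen : (a ++ [p]).length = l₁.length := by
    rw [heq] at hl
    simp [size_ctreeL (List.nodup_append.1 hl).1, ha]
  obtain ⟨rfl, hr⟩ := List.append_inj (by simpa using heq) hlen
  obtain ⟨rfl, rfl⟩ := List.cons.inj hr
  refine ⟨j, hj, ?_⟩
  have hnd : (a ++ [p]).Nodup := (List.nodup_append.1 (heq ▸ hl)).1
  rw [ctreeL_split (fun x hx => h₁ x (by simp [hx])) ?_, hcut, ← ctreeL_dropLast hnd,
    List.dropLast_concat]
  exact List.forall_mem_cons.2 ⟨h₁ p (by simp), h₂⟩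

lemma exists_forall_mem_lt (l : List ℤ) : ∃ c, ∀ x ∈ l, x < c := by
  obtain ⟨M, hM⟩ := l.toFinset.exists_le
  exact ⟨M + 1, fun x hx => Int.lt_add_one_of_le (hM x (List.mem_toFinset.2 hx))⟩

/-- Realizing `cutL j R` to the right of a realization of `L` that ends in `p`: an affine map
of large slope sends the first entry of a realization of `cutL j R` to `p` and all the
other entries away from the realization of `L`. -/
lemma exists_swap_root_pred_of_cutL (hL : L ≠ .nil) {j : ℕ} (hj : j ≤ R.LMP) :
    ∃ a p q b, (a ++ p :: q :: b).Nodup ∧ a.length + 1 = L.size ∧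
      ctreeL (a ++ p :: q :: b) = .node L R ∧
      ctreeL (a ++ q :: p :: b) = .node L.delLast (cutL j R) := by
  obtain ⟨lL, hLnd, rfl, -⟩ := exists_nodup_ctreeL_eq L 0
  obtain ⟨a, p, rfl⟩ := (List.eq_nil_or_concat' lL).resolve_left (by rintro rfl; exact hL rfl)
  obtain ⟨u, hund, huct, -⟩ := exists_nodup_ctreeL_eq (cutL j R) 0
  obtain ⟨p', b', rfl⟩ :=
    List.exists_cons_of_ne_nil (l := u) (by rintro rfl; exact cutL_ne_nil j R huct.symm)
  have hp'b' := List.nodup_cons.1 hund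
  obtain ⟨j', hj', hcut⟩ := ctreeL_cons hp'b'.2 hp'b'.1
  obtain ⟨-, hb'R⟩ := eq_of_cutL_eq hj' hj (hcut.symm.trans huct)
  obtain ⟨N, hN⟩ := exists_forall_mem_lt ((a ++ [p]).map fun s => |s - p|)
  simp only [List.mem_map, forall_exists_index, and_imp, forall_apply_eq_imp_iff₂] at hN
  have hN0 : 0 < N := by simpa using hN p (by simp)
  set f : ℤ → ℤ := fun t => N * (t - p') + p with hf
  have hfmono : StrictMono f := fun s t hst => by simp only [hf]; nlinarith
  have hfar : ∀ t ∈ b', ∀ s ∈ a ++ [p], f t ≠ s := by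
    rintro t ht s hs rfl
    have h1 : 1 ≤ |t - p'| := Int.one_le_abs (sub_ne_zero.2 fun h => hp'b'.1 (h ▸ ht))
    have := hN _ hs
    simp only [hf, add_sub_cancel_right, abs_mul, abs_of_pos hN0] at this
    nlinarith
  set b := b'.map f
  obtain ⟨q, hq⟩ : ∃ q, ∀ x ∈ a ++ [p] ++ b, q < x :=
    ⟨listMin (a ++ [p] ++ b) - 1, fun x hx => by linarith [listMin_le (by simp) hx]⟩
  have hqL : ∀ x ∈ a ++ [p], q < x := fun x hx => hq x (List.mem_append_left _ hx)
  have hqb : ∀ x ∈ b, q < x := fun x hx => hq x (List.mem_append_right _ hx)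
  have hbR : ctreeL b = R := by rw [ctreeL_map hfmono hp'b'.2, hb'R]
  have hpb : ctreeL (p :: b) = cutL j R := by
    rw [← huct, ← ctreeL_map hfmono hund, List.map_cons]
    simp [hf, b]
  refine ⟨a, p, q, b, ?_, by simp [size_ctreeL hLnd], ?_, ?_⟩
  · rw [show a ++ p :: q :: b = a ++ [p] ++ q :: b by simp]
    refine List.nodup_append.2 ⟨hLnd, List.nodup_cons.2 ⟨fun h => (hqb q h).false,
      hp'b'.2.map hfmono.injective⟩, fun x hx y hy => ?_⟩
    rcases List.mem_cons.1 hy with rfl | hy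
    · exact (hqL x hx).ne'
    · obtain ⟨t, ht, rfl⟩ := List.mem_map.1 hy
      exact (hfar t ht x hx).symm
  · rw [show a ++ p :: q :: b = a ++ [p] ++ q :: b by simp, ctreeL_split hqL hqb, hbR]
  · rw [ctreeL_split (fun x hx => hqL x (by simp [hx]))
      (List.forall_mem_cons.2 ⟨hqL p (by simp), hqb⟩), hpb, ← ctreeL_dropLast hLnd,
      List.dropLast_concat]

end RootSwap

section Sequences

variable {x : ℕ → ℤ} {m i : ℕ}

lemma seqList_length (x : ℕ → ℤ) (a b : ℕ) : (seqList x a b).length = b + 1 - a := by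
  simp [seqList]

lemma seqList_congr {y : ℕ → ℤ} {a b : ℕ} (h : ∀ j, a ≤ j → j ≤ b → x j = y j) :
    seqList x a b = seqList y a b :=
  List.map_congr_left fun k hk => h _ (by omega) (by simp at hk; omega)

lemma seqList_append {a b c : ℕ} (h₁ : a ≤ c + 1) (h₂ : c ≤ b) :
    seqList x a b = seqList x a c ++ seqList x (c + 1) b := by
  simp only [seqList, show b + 1 - a = (c + 1 - a) + (b + 1 - (c + 1)) by omega, List.range_add,
    List.map_append, List.map_map]
  congr 2
  funext k
  simp only [Function.comp_apply]
  congr 1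
  omega

lemma seqList_cons {a b : ℕ} (h : a ≤ b) : seqList x a b = x a :: seqList x (a + 1) b := by
  simp only [seqList, show b + 1 - a = (b + 1 - (a + 1)) + 1 by omega, List.range_succ_eq_map,
    List.map_cons, List.map_map, Nat.add_zero]
  congr 2
  funext k
  simp only [Function.comp_apply, Nat.succ_eq_add_one]
  congr 1
  omega

lemma seqList_eq_append_cons_cons (x : ℕ → ℤ) (h₁ : 1 ≤ i) (h₂ : i + 1 ≤ m) :
    seqList x 1 m = seqList x 1 (i - 1) ++ x i :: x (i + 1) :: seqList x (i + 2) m := by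
  rw [seqList_append (c := i - 1) (by omega) (by omega), Nat.sub_add_cancel h₁,
    seqList_cons (a := i) (by omega), seqList_cons (a := i + 1) (by omega)]

lemma exists_seqList_swapAt (h₁ : 1 ≤ i) (h₂ : i + 1 ≤ m) :
    ∃ A B, A.length + 1 = i ∧ seqList x 1 m = A ++ x i :: x (i + 1) :: B ∧
      seqList (swapAt x i) 1 m = A ++ x (i + 1) :: x i :: B := by
  refine ⟨seqList x 1 (i - 1), seqList x (i + 2) m, by simp [seqList_length]; omega,
    seqList_eq_append_cons_cons x h₁ h₂, ?_⟩
  rw [seqList_eq_append_cons_cons _ h₁ h₂]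
  simp only [swapAt, if_pos, if_neg (Nat.succ_ne_self i)]
  congr 1
  · exact seqList_congr fun j _ hj => by simp [swapAt, show j ≠ i by omega, show j ≠ i + 1 by omega]
  · congr 2
    exact seqList_congr fun j hj _ => by simp [swapAt, show j ≠ i by omega, show j ≠ i + 1 by omega]

lemma seqList_nodup (hinj : Set.InjOn x (Set.Icc 1 m)) : (seqList x 1 m).Nodup := by
  refine List.Nodup.map_on (fun j hj k hk hjk => ?_) List.nodup_range
  simp only [List.mem_range] at hj hk
  have := hinj (Set.mem_Icc.2 ⟨by omega, by omega⟩) (Set.mem_Icc.2 ⟨by omega, by omega⟩) hjk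
  omega

lemma seqList_getD (l : List ℤ) : seqList (fun n => l.getD (n - 1) 0) 1 l.length = l := by
  refine List.ext_getElem (by simp [seqList_length]) fun k h₁ h₂ => ?_
  simp [seqList, List.getD_eq_getElem?_getD, List.getElem?_eq_getElem h₂]

lemma injOn_getD {l : List ℤ} (hl : l.Nodup) :
    Set.InjOn (fun n => l.getD (n - 1) 0) (Set.Icc 1 l.length) := by
  intro j hj k hk hjk
  simp only [Set.mem_Icc] at hj hk
  simp only [List.getD_eq_getElem?_getD, List.getElem?_eq_getElem (show j - 1 < l.length by omega),
    List.getElem?_eq_getElem (show k - 1 < l.length by omega), Option.getD_some] at hjk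
  have := (hl.getElem_inj_iff).1 hjk
  omega

theorem mem_ngi_iff {T S : BTree} :
    S ∈ ngi m T i ↔ ∃ a p q b, (a ++ p :: q :: b).Nodup ∧ a.length + 1 = i ∧
      (a ++ p :: q :: b).length = m ∧ ctreeL (a ++ p :: q :: b) = T ∧
      S = ctreeL (a ++ q :: p :: b) := by
  constructor
  · rintro ⟨h₁, h₂, x, hinj, rfl, rfl⟩
    obtain ⟨A, B, hA, hx, hsx⟩ := exists_seqList_swapAt (x := x) h₁ h₂
    refine ⟨A, x i, x (i + 1), B, hx ▸ seqList_nodup hinj, hA, ?_, hx ▸ rfl, hsx ▸ rfl⟩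
    rw [← hx, seqList_length]
    omega
  · rintro ⟨a, p, q, b, hnd, rfl, rfl, rfl, rfl⟩
    set l := a ++ p :: q :: b with hl
    have hlen : l.length = a.length + b.length + 2 := by simp [hl]; omega
    obtain ⟨A, B, hA, hx, hsx⟩ :=
      exists_seqList_swapAt (x := fun n => l.getD (n - 1) 0) (m := l.length) (i := a.length + 1)
        (by omega) (by omega)
    rw [seqList_getD] at hx
    obtain ⟨rfl, hr⟩ := List.append_inj hx.symm (by omega)
    obtain ⟨hp, hr⟩ := List.cons.inj hr
    obtain ⟨hq, rfl⟩ := List.cons.inj hr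
    refine ⟨by omega, by omega, _, injOn_getD hnd, by rw [ctreeOf, seqList_getD], ?_⟩
    rw [ctreeOf, hsx, hp, hq]

end Sequences

section SwapNeighbours

open BTree

variable {m i : ℕ} {L R : BTree}

lemma ngi_size_left (hL : L ≠ .nil) :
    ngi (node L R).size (node L R) L.size =
      (fun j => node L.delLast (cutL j R)) '' Set.Iic R.LMP := by
  ext S
  rw [mem_ngi_iff]
  constructor
  · rintro ⟨a, p, q, b, hnd, ha, -, h, rfl⟩
    obtain ⟨j, hj, h'⟩ := exists_cutL_of_swap_root_pred hnd ha h
    exact ⟨j, hj, h'.symm⟩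
  · rintro ⟨j, hj, rfl⟩
    obtain ⟨a, p, q, b, hnd, ha, h, h'⟩ := exists_swap_root_pred_of_cutL hL hj
    exact ⟨a, p, q, b, hnd, ha, by rw [← size_ctreeL hnd, h], h, h'.symm⟩

lemma ncard_ngi_size_left (hL : L ≠ .nil) :
    (ngi (node L R).size (node L R) L.size).ncard = R.LMP + 1 := by
  rw [ngi_size_left hL, Set.InjOn.ncard_image, ← Finset.coe_Iic, Set.ncard_coe_finset,
    Nat.card_Iic]
  exact fun j hj j' hj' h => (eq_of_cutL_eq hj hj' (node.inj h).2).1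

lemma mirror_mem_ngi {S T : BTree} (h : S ∈ ngi m T i) : S.mirror ∈ ngi m T.mirror (m - i) := by
  rw [mem_ngi_iff] at h ⊢
  obtain ⟨a, p, q, b, hnd, rfl, rfl, rfl, rfl⟩ := h
  have hnd' : (a ++ q :: p :: b).Nodup := ((List.Perm.swap p q b).append_left a).nodup_iff.2 hnd
  refine ⟨b.reverse, q, p, a.reverse, by simpa using List.nodup_reverse.2 hnd, by simp; omega,
    by simp; omega, ?_, ?_⟩
  · rw [← ctreeL_reverse hnd]; simp
  · rw [← ctreeL_reverse hnd']; simp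

lemma ncard_ngi_mirror (T : BTree) : (ngi m T.mirror (m - i)).ncard = (ngi m T i).ncard := by
  suffices ngi m T.mirror (m - i) = mirror '' ngi m T i by
    rw [this, Set.ncard_image_of_injective _ mirror_injective]
  ext S
  constructor
  · intro h
    have := mirror_mem_ngi h
    rw [mirror_mirror, Nat.sub_sub_self (by have := h.1; omega)] at this
    exact ⟨S.mirror, this, mirror_mirror S⟩
  · rintro ⟨S', hS', rfl⟩
    exact mirror_mem_ngi hS'

end SwapNeighbours

theorem stmt9 (m k : ℕ) (L R : BTree)
    (hsize : (BTree.node L R).size = m) (hL : L.size = k - 1)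
    (hk : 2 ≤ k) (hkm : k + 1 ≤ m) :
    (ngi m (BTree.node L R) (k - 1)).ncard = BTree.LMP R + 1 ∧
    (ngi m (BTree.node L R) k).ncard = BTree.RMP L + 1 := by
  subst hsize
  have hLne : L ≠ .nil := by rintro rfl; simp [BTree.size] at hL; omega
  have hRne : R.mirror ≠ .nil := by
    rintro h; simp [BTree.size, ← BTree.size_mirror R, h] at hkm; omega
  refine ⟨by rw [← hL]; exact ncard_ngi_size_left hLne, ?_⟩
  have hmirror : BTree.node L R = (BTree.node R.mirror L.mirror).mirror := by simp [BTree.mirror]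
  have hsize' : (BTree.node L R).size = (BTree.node R.mirror L.mirror).size := by
    simp [BTree.size]; omega
  have hk' : k = (BTree.node R.mirror L.mirror).size - R.mirror.size := by
    simp [BTree.size] at hL ⊢; omega
  rw [hsize', hk', hmirror, ncard_ngi_mirror, ncard_ngi_size_left hRne, BTree.LMP_mirror]
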